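/- arXiv:2205.14344 — 2 statements merged into one kernel-verified Lean document; each statement's English description precedes it below -/
import Mathlib

section
/- For m = 2 differentiable objectives f₁, f₂ : ℝⁿ → ℝ, if x is a point where ∇f₁(x) and ∇f₂(x) are not both zero and there is no convex combination w∇f₁(x) + (1−w)∇f₂(x) (w ∈ [0,1]) equal to zero, then the minimum-norm point u of the segment conv{∇f₁(x), ∇f₂(x)} is nonzero and satisfies ⟨u, ∇f₁(x)⟩ > 0 and ⟨u, ∇f₂(x)⟩ > 0. -/
open RealInnerProductSpace

theorem stmt_6 {n : ℕ} (f₁ f₂ : EuclideanSpace ℝ (Fin n) → ℝ)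
    (x g₁ g₂ u : EuclideanSpace ℝ (Fin n))
    (hg₁ : HasGradientAt f₁ g₁ x) (hg₂ : HasGradientAt f₂ g₂ x)
    (hnz : ¬(g₁ = 0 ∧ g₂ = 0))
    (hkkt : ¬∃ w ∈ Set.Icc (0 : ℝ) 1, w • g₁ + (1 - w) • g₂ = 0)
    (huseg : u ∈ segment ℝ g₁ g₂)
    (hmin : ∀ v ∈ segment ℝ g₁ g₂, ‖u‖ ≤ ‖v‖) :
    u ≠ 0 ∧ 0 < ⟪u, g₁⟫ ∧ 0 < ⟪u, g₂⟫ := by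
  -- u ≠ 0
  have hune : u ≠ 0 := by
    intro h0
    obtain ⟨a, b, ha, hb, hab, hu⟩ := huseg
    exact hkkt ⟨a, ⟨ha, by linarith⟩, by
      have : (1 - a) = b := by linarith
      rw [this, hu, h0]⟩
  -- variational inequality: for v in segment, ‖u‖² ≤ ⟪u, v⟫
  have key : ∀ v ∈ segment ℝ g₁ g₂, ‖u‖ ^ 2 ≤ ⟪u, v⟫ := by
    intro v hv
    by_contra hlt
    push_neg at hlt
    set c : ℝ := ⟪u, v - u⟫ with hc
    have hcneg : c < 0 := by
      have : ⟪u, v - u⟫ = ⟪u, v⟫ - ⟪u, u⟫ := inner_sub_right u v u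
      have h2 : ⟪u, u⟫ = ‖u‖ ^ 2 := real_inner_self_eq_norm_sq u
      rw [hc, this, h2]; linarith
    set d : ℝ := ‖v - u‖ ^ 2 with hd
    have hd0 : 0 ≤ d := sq_nonneg _
    set t : ℝ := min 1 (-c / (d + 1)) with ht
    have ht0 : 0 < t := by
      exact lt_min one_pos (div_pos (by linarith) (by linarith))
    have ht1 : t ≤ 1 := min_le_left _ _
    have hmem : (1 - t) • u + t • v ∈ segment ℝ g₁ g₂ := by
      exact (convex_segment g₁ g₂) huseg hv (by linarith) (le_of_lt ht0) (by ring)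
    have hle := hmin _ hmem
    have hrw : (1 - t) • u + t • v = u + t • (v - u) := by
      rw [smul_sub]; module
    rw [hrw] at hle
    have hexp : ‖u + t • (v - u)‖ ^ 2 = ‖u‖ ^ 2 + 2 * (t * c) + t ^ 2 * d := by
      rw [norm_add_sq_real, real_inner_smul_right, norm_smul]
      simp [hc, hd, mul_pow]
    have hsq : ‖u‖ ^ 2 ≤ ‖u + t • (v - u)‖ ^ 2 := by
      apply pow_le_pow_left₀ (norm_nonneg _) hle
    rw [hexp] at hsq
    have h1 : 0 ≤ 2 * c + t * d := by
      have : 0 ≤ t * (2 * c + t * d) := by nlinarith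
      nlinarith
    have htd : t * d ≤ -c := by
      have h2 : t ≤ -c / (d + 1) := min_le_right _ _
      have h3 : t * (d + 1) ≤ -c := by
        rw [← le_div_iff₀ (by positivity)]
        exact h2
      nlinarith
    linarith
  have husq : 0 < ‖u‖ ^ 2 := pow_pos (norm_pos_iff.mpr hune) 2
  obtain ⟨a, b, ha, hb, hab, hu⟩ := huseg
  have h1 : g₁ ∈ segment ℝ g₁ g₂ := left_mem_segment ℝ g₁ g₂
  have h2 : g₂ ∈ segment ℝ g₁ g₂ := right_mem_segment ℝ g₁ g₂
  exact ⟨hune, lt_of_lt_of_le husq (key g₁ h1), lt_of_lt_of_le husq (key g₂ h2)⟩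
end

section
/- In a bi-objective problem (m = 2) with differentiable objectives, if at x the KKT stationarity fails — i.e., there is no w ∈ [0,1] with w ∇f₁(x) + (1−w) ∇f₂(x) = 0 — then the minimum-norm point u of conv{∇f₁(x), ∇f₂(x)} satisfies u ≠ 0, and there exists η₀ > 0 so that for all η ∈ (0, η₀), the point x' = x − η u satisfies f₁(x') < f₁(x) and f₂(x') < f₂(x); hence x' Pareto dominates x. -/
open Filter Set

lemma aux_deriv_neg {φ : ℝ → ℝ} {d : ℝ} (h : HasDerivAt φ d 0) (hd : d < 0) :
    ∀ᶠ η in nhdsWithin (0:ℝ) (Ioi 0), φ η < φ 0 := by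
  have hs : HasDerivWithinAt φ d (Ioi 0) 0 := h.hasDerivWithinAt
  have ht := hasDerivWithinAt_iff_tendsto_slope.mp hs
  have hss : (Ioi (0:ℝ)) \ {0} = Ioi 0 := by
    ext y
    exact ⟨fun h => h.1, fun h => ⟨h, ne_of_gt h⟩⟩
  rw [hss] at ht
  have hev : ∀ᶠ η in nhdsWithin (0:ℝ) (Ioi 0), slope φ 0 η < 0 :=
    ht.eventually (eventually_lt_nhds hd)
  filter_upwards [hev, self_mem_nhdsWithin] with η hη (hpos : η ∈ Ioi 0)
  have : slope φ 0 η = (φ η - φ 0) / η := by simp [slope_def_field]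
  rw [this] at hη
  have := mul_neg_of_pos_of_neg (show (0:ℝ) < η from hpos) hη
  rw [mul_div_cancel₀ _ (ne_of_gt (show (0:ℝ) < η from hpos))] at this
  linarith

theorem stmt_16 {n : ℕ} (f₁ f₂ : EuclideanSpace ℝ (Fin n) → ℝ)
    (x g₁ g₂ u : EuclideanSpace ℝ (Fin n))
    (hg₁ : HasGradientAt f₁ g₁ x) (hg₂ : HasGradientAt f₂ g₂ x)
    (hkkt : ¬∃ w ∈ Set.Icc (0 : ℝ) 1, w • g₁ + (1 - w) • g₂ = 0)
    (huseg : u ∈ segment ℝ g₁ g₂)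
    (hmin : ∀ v ∈ segment ℝ g₁ g₂, ‖u‖ ≤ ‖v‖) :
    u ≠ 0 ∧
    ∃ η₀ > (0 : ℝ), ∀ η ∈ Set.Ioo (0 : ℝ) η₀,
      f₁ (x - η • u) < f₁ x ∧ f₂ (x - η • u) < f₂ x := by
  have hu0 : u ≠ 0 := by
    intro h0
    obtain ⟨a, b, ha, hb, hab, habu⟩ := huseg
    exact hkkt ⟨a, ⟨ha, by linarith⟩, by
      have : b = 1 - a := by linarith
      rw [← this]; rw [h0] at habu; exact habu⟩
  -- variational inequality
  have key : ∀ g ∈ segment ℝ g₁ g₂, ‖u‖ ^ 2 ≤ inner ℝ u g := by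
    intro g hg
    set c : ℝ := inner ℝ u (g - u) with hc
    have hcnn : 0 ≤ c := by
      by_contra hcneg
      push_neg at hcneg
      set s : ℝ := ‖g - u‖ ^ 2 with hs
      have hs0 : 0 < s := by
        rcases eq_or_ne g u with rfl | hne
        · simp [hc] at hcneg
        · have h1 : (0:ℝ) < ‖g - u‖ := norm_pos_iff.mpr (sub_ne_zero.mpr hne)
          rw [hs]; positivity
      set t : ℝ := min 1 (-c / s) with htdef
      have ht0 : 0 < t := lt_min one_pos (div_pos (by linarith) hs0)
      have ht1 : t ≤ 1 := min_le_left _ _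
      have hts : t * s ≤ -c := by
        have : t ≤ -c / s := min_le_right _ _
        calc t * s ≤ (-c / s) * s := by nlinarith
          _ = -c := by field_simp
      have hv : (1 - t) • u + t • g ∈ segment ℝ g₁ g₂ :=
        (convex_segment g₁ g₂) huseg hg (by linarith) ht0.le (by ring)
      have hle := hmin _ hv
      have heq : (1 - t) • u + t • g = u + t • (g - u) := by module
      rw [heq] at hle
      have hexp : ‖u + t • (g - u)‖ ^ 2 = ‖u‖ ^ 2 + 2 * (t * c) + t ^ 2 * s := by
        rw [norm_add_sq_real, real_inner_smul_right, norm_smul, mul_pow, Real.norm_eq_abs, sq_abs, ← hc, ← hs]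
      have hsq : ‖u‖ ^ 2 ≤ ‖u + t • (g - u)‖ ^ 2 := by
        have := norm_nonneg u
        nlinarith
      rw [hexp] at hsq
      nlinarith
    have : (inner ℝ u g : ℝ) = ‖u‖ ^ 2 + c := by
      rw [hc, inner_sub_right, real_inner_self_eq_norm_sq]; ring
    linarith
  have hupos : (0:ℝ) < ‖u‖ ^ 2 := by
    exact pow_pos (norm_pos_iff.mpr hu0) 2
  refine ⟨hu0, ?_⟩
  -- derivatives of η ↦ f (x - η • u)
  have hcurve : ∀ η : ℝ, HasDerivAt (fun η : ℝ => x - η • u) (-u) η := by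
    intro η
    simpa using ((((hasDerivAt_id η).smul_const u)).const_sub x)
  have hφ : ∀ (f : EuclideanSpace ℝ (Fin n) → ℝ) (g : EuclideanSpace ℝ (Fin n)),
      HasGradientAt f g x → g ∈ segment ℝ g₁ g₂ →
      ∀ᶠ η in nhdsWithin (0:ℝ) (Ioi 0), f (x - η • u) < f x := by
    intro f g hgrad hgseg
    have hfd := hgrad.hasFDerivAt
    have hcomp : HasDerivAt (fun η : ℝ => f (x - η • u))
        ((InnerProductSpace.toDual ℝ _ g) (-u)) 0 := by
      have hfd' : HasFDerivAt f ((InnerProductSpace.toDual ℝ _ g))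
          ((fun η : ℝ => x - η • u) 0) := by simpa using hfd
      exact hfd'.comp_hasDerivAt 0 (hcurve 0)
    have hd : ((InnerProductSpace.toDual ℝ _ g) (-u)) < 0 := by
      have : ((InnerProductSpace.toDual ℝ _ g) (-u)) = -(inner ℝ u g : ℝ) := by
        rw [InnerProductSpace.toDual_apply_apply, inner_neg_right, real_inner_comm]
      rw [this]
      have := key g hgseg
      linarith
    have := aux_deriv_neg hcomp hd
    simpa using this
  have hev := (hφ f₁ g₁ hg₁ (left_mem_segment ℝ g₁ g₂)).and
    (hφ f₂ g₂ hg₂ (right_mem_segment ℝ g₁ g₂))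
  rw [Filter.eventually_iff, mem_nhdsGT_iff_exists_Ioo_subset] at hev
  obtain ⟨η₀, hη₀, hsub⟩ := hev
  exact ⟨η₀, hη₀, fun η hη => hsub hη⟩
end
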